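/- arXiv:2506.18507 — 7 statements merged into one kernel-verified Lean document; each statement's English description precedes it below -/
import Mathlib

section
/- Let V be a finite-dimensional real vector space and C ⊆ V a convex set. Let φ₁ ∈ V* with inf φ₁(C) = −w₋ and sup φ₁(C) = w₊, where w₋, w₊ > 0. Let θ ∈ V* and c' ∈ ℝ with −1/w₊ ≤ c' ≤ 1/w₋, and suppose c'φ₁ − θ belongs to the one-sided polar C* = {ξ ∈ V* : ξ(x) ≥ −1 for all x ∈ C}. Then −(min(w₋, w₊)/(w₋ + w₊))·θ ∈ C*. -/
/-- The one-sided polar of a set `C ⊆ V`: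
`C* = {ξ ∈ V* : ξ(x) ≥ -1 for all x ∈ C}`. -/
def onePolar {V : Type*} [AddCommGroup V] [Module ℝ V] (C : Set V) :
    Set (Module.Dual ℝ V) := {ξ | ∀ x ∈ C, -1 ≤ ξ x}

/-- Let `V` be a finite-dimensional real vector space and `C ⊆ V` a convex set. Let
`φ₁ ∈ V*` with `inf φ₁(C) = -wm` and `sup φ₁(C) = wp`, where `wm, wp > 0`. Let `θ ∈ V*`
and `c' ∈ ℝ` with `-1/wp ≤ c' ≤ 1/wm`, and suppose `c'·φ₁ - θ ∈ C*`. Then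
`-(min(wm, wp)/(wm + wp))·θ ∈ C*`. -/
theorem stmt_3 {V : Type*} [AddCommGroup V] [Module ℝ V] [FiniteDimensional ℝ V]
    (C : Set V) (hCconv : Convex ℝ C)
    (φ₁ θ : Module.Dual ℝ V) (wm wp : ℝ) (hwm : 0 < wm) (hwp : 0 < wp)
    (hinf : IsGLB ((fun x => φ₁ x) '' C) (-wm))
    (hsup : IsLUB ((fun x => φ₁ x) '' C) wp)
    (c' : ℝ) (hc'l : -1 / wp ≤ c') (hc'r : c' ≤ 1 / wm)
    (hmem : c' • φ₁ - θ ∈ onePolar C) :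
    -(min wm wp / (wm + wp)) • θ ∈ onePolar C := by
  intro x hx
  have h1 := hmem x hx
  simp only [LinearMap.sub_apply, LinearMap.smul_apply, smul_eq_mul] at h1
  have h2 : -wm ≤ φ₁ x := hinf.1 ⟨x, hx, rfl⟩
  have h3 : φ₁ x ≤ wp := hsup.1 ⟨x, hx, rfl⟩
  have hwmp : 0 < wm + wp := by linarith
  simp only [LinearMap.smul_apply, smul_eq_mul]
  -- θ x ≤ c' * φ₁ x + 1
  have hθ : θ x ≤ c' * φ₁ x + 1 := by linarith
  have hcb : c' * φ₁ x ≤ max (wp / wm) (wm / wp) := by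
    rcases le_or_gt 0 c' with hc | hc
    · calc c' * φ₁ x ≤ c' * wp := by nlinarith
        _ ≤ (1/wm) * wp := by nlinarith
        _ ≤ max (wp / wm) (wm / wp) := by rw [one_div_mul_eq_div]; exact le_max_left _ _
    · calc c' * φ₁ x ≤ c' * (-wm) := by nlinarith
        _ ≤ (-1/wp) * (-wm) := by nlinarith
        _ = wm / wp := by ring
        _ ≤ max (wp / wm) (wm / wp) := le_max_right _ _
  rcases le_total wm wp with h | h
  · rw [min_eq_left h]
    have : max (wp / wm) (wm / wp) = wp / wm := max_eq_left (by
      rw [div_le_div_iff₀ hwp hwm]; nlinarith)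
    rw [this] at hcb
    rw [neg_mul, neg_le_neg_iff, div_mul_eq_mul_div, div_le_iff₀ hwmp]
    have e : wm * (wp / wm) = wp := by field_simp
    nlinarith [mul_le_mul_of_nonneg_left hθ hwm.le, mul_le_mul_of_nonneg_left hcb hwm.le]
  · rw [min_eq_right h]
    have : max (wp / wm) (wm / wp) = wm / wp := max_eq_right (by
      rw [div_le_div_iff₀ hwm hwp]; nlinarith)
    rw [this] at hcb
    rw [neg_mul, neg_le_neg_iff, div_mul_eq_mul_div, div_le_iff₀ hwmp]
    have e : wp * (wm / wp) = wm := by field_simp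
    nlinarith [mul_le_mul_of_nonneg_left hθ hwp.le, mul_le_mul_of_nonneg_left hcb hwp.le]
end

section
/- Let N be a lattice and let U ⊆ N_ℝ be a convex set of the form U = conv(F) + σ₀, where F ⊆ N_ℝ is a finite set and σ₀ is the convex cone generated by finitely many elements of N. Let t > 0 and suppose N ∩ int(tU) = ∅. Let W = N ∩ (σ₀ − σ₀) (a saturated subgroup of N), let N' = N/W be the quotient lattice, let p_ℝ : N_ℝ → N'_ℝ = N_ℝ/(σ₀ − σ₀) be the induced projection, and let U' = p_ℝ(U). Then N' ∩ int(tU') = ∅, where the interior is taken in N'_ℝ. -/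
open Pointwise

/-- The lattice `ℤ^d` viewed inside its realification `ℝ^d`
(a model of an arbitrary lattice of rank `d`). -/
def intPts (d : ℕ) : Set (Fin d → ℝ) := {x | ∀ i, ∃ n : ℤ, x i = (n : ℝ)}

/-- The convex cone generated by a set `s`: all finite nonnegative linear
combinations of elements of `s`. -/
def coneHull {V : Type*} [AddCommGroup V] [Module ℝ V] (s : Set V) : Set V :=
  {x | ∃ (n : ℕ) (c : Fin n → ℝ) (v : Fin n → V),
    (∀ i, 0 ≤ c i) ∧ (∀ i, v i ∈ s) ∧ x = ∑ i, c i • v i}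

/-!
A point `y = p x` of `N' ∩ int(tU')` with `x ∈ N` lies in the interior of
`p⁻¹(tU') = t • conv F + (σ₀ - σ₀)`, so some ball `B(x, ε)` is covered by that set. Every element
of `σ₀ - σ₀ = span G` of bounded norm is a combination of `G` with bounded coefficients (a right
inverse of the linear-combination map is continuous), hence lands in `σ₀` after adding
`w = M • ∑ g` for `M` large. The lattice point `x + w` then has the ball `B(x + w, ε)` inside
`t • conv F + σ₀ = tU`, contradicting `N ∩ int(tU) = ∅`.
-/

open Bornology Metric Submodule
open scoped NNReal

section coneHull

variable {V : Type*} [AddCommGroup V] [Module ℝ V] {s : Set V}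

theorem coneHull_eq_span (s : Set V) : coneHull s = (span ℝ≥0 s : Set V) := by
  ext x
  rw [SetLike.mem_coe, mem_span_set']
  constructor
  · rintro ⟨n, c, v, hc, hv, rfl⟩
    exact ⟨n, fun i => ⟨c i, hc i⟩, fun i => ⟨v i, hv i⟩, rfl⟩
  · rintro ⟨n, c, v, rfl⟩
    exact ⟨n, fun i => c i, fun i => v i, fun i => (c i).2, fun i => (v i).2, rfl⟩

theorem coneHull_subset_span : coneHull s ⊆ span ℝ s := by
  rw [coneHull_eq_span]
  exact span_le_restrictScalars ℝ≥0 ℝ s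

theorem span_sub_coneHull (s : Set V) :
    span ℝ {x | ∃ u ∈ coneHull s, ∃ v ∈ coneHull s, x = u - v} = span ℝ s := by
  refine le_antisymm (span_le.2 ?_) (span_mono fun x hx => ?_)
  · rintro _ ⟨u, hu, v, hv, rfl⟩
    exact sub_mem (coneHull_subset_span hu) (coneHull_subset_span hv)
  · rw [coneHull_eq_span]
    exact ⟨x, subset_span hx, 0, zero_mem _, (sub_zero x).symm⟩

theorem smul_coneHull {t : ℝ} (ht : 0 < t) : t • coneHull s = coneHull s := by
  have key : ∀ {r : ℝ}, 0 < r → r • coneHull s ⊆ coneHull s := by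
    rintro r hr _ ⟨x, hx, rfl⟩
    rw [coneHull_eq_span] at hx ⊢
    exact smul_mem _ (⟨r, hr.le⟩ : ℝ≥0) hx
  refine (key ht).antisymm fun x hx => ⟨t⁻¹ • x, key (inv_pos.2 ht) ⟨x, hx, rfl⟩, ?_⟩
  exact smul_inv_smul₀ ht.ne' x

end coneHull

def intPtsAddSubgroup (d : ℕ) : AddSubgroup (Fin d → ℝ) where
  carrier := intPts d
  add_mem' {x y} hx hy i := by
    obtain ⟨m, hm⟩ := hx i
    obtain ⟨n, hn⟩ := hy i
    exact ⟨m + n, by simp [hm, hn]⟩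
  zero_mem' _ := ⟨0, by simp⟩
  neg_mem' {x} hx i := by
    obtain ⟨n, hn⟩ := hx i
    exact ⟨-n, by simp [hn]⟩

theorem LinearMap.preimage_image_add_subset_add_ker {R V W : Type*} [Ring R] [AddCommGroup V]
    [Module R V] [AddCommGroup W] [Module R W] (p : V →ₗ[R] W) {S σ : Set V}
    (hσ : σ ⊆ LinearMap.ker p) : p ⁻¹' (p '' (S + σ)) ⊆ S + LinearMap.ker p := by
  rintro z ⟨_, ⟨a, ha, c, hc, rfl⟩, hz⟩
  refine ⟨a, ha, z - a, ?_, add_sub_cancel a z⟩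
  rw [SetLike.mem_coe, LinearMap.mem_ker, map_sub, ← hz, map_add, hσ hc, add_zero, sub_self]

section Normed

variable {V : Type*} [NormedAddCommGroup V] [NormedSpace ℝ V]

theorem exists_nsmul_sum_add_mem_coneHull (G : Finset V) {B : Set V} (hB : IsBounded B) :
    ∃ M : ℕ, ∀ k ∈ B, k ∈ span ℝ (G : Set V) → k + M • ∑ g ∈ G, g ∈ coneHull (G : Set V) := by
  let T : (G → ℝ) →ₗ[ℝ] V := Fintype.linearCombination ℝ ((↑) : G → V)
  have hT : LinearMap.range T = span ℝ G := by
    rw [Fintype.range_linearCombination, Subtype.range_coe]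
  obtain ⟨S, hS⟩ := T.rangeRestrict.exists_rightInverse_of_surjective T.range_rangeRestrict
  let S' := LinearMap.toContinuousLinearMap S
  obtain ⟨R, hR⟩ := hB.exists_norm_le
  refine ⟨⌈‖S'‖ * R⌉₊, fun k hkB hkG => ?_⟩
  rw [← hT] at hkG
  set c := S ⟨k, hkG⟩
  have hTc : T c = k := congr_arg Subtype.val (LinearMap.congr_fun hS ⟨k, hkG⟩)
  have hc : ∀ g, |c g| ≤ ⌈‖S'‖ * R⌉₊ := fun g => calc
    |c g| ≤ ‖c‖ := norm_le_pi_norm c g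
    _ ≤ ‖S'‖ * ‖(⟨k, hkG⟩ : LinearMap.range T)‖ := S'.le_opNorm _
    _ ≤ ‖S'‖ * R := by gcongr; exact hR k hkB
    _ ≤ _ := Nat.le_ceil _
  rw [← hTc, Fintype.linearCombination_apply, ← Finset.sum_coe_sort G, Finset.smul_sum,
    ← Finset.sum_add_distrib, coneHull_eq_span]
  refine sum_mem fun g _ => ?_
  rw [← Nat.cast_smul_eq_nsmul ℝ, ← add_smul]
  exact smul_mem _ (⟨_, by linarith [neg_abs_le (c g), hc g]⟩ : ℝ≥0) (subset_span g.2)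

theorem exists_nsmul_sum_add_mem_interior_add_coneHull {A : Set V} (hA : IsBounded A)
    (G : Finset V) {x : V} (hx : x ∈ interior (A + (span ℝ (G : Set V) : Set V))) :
    ∃ M : ℕ, x + M • ∑ g ∈ G, g ∈ interior (A + coneHull (G : Set V)) := by
  obtain ⟨ε, hε, hball⟩ := Metric.isOpen_iff.mp isOpen_interior x hx
  obtain ⟨M, hM⟩ := exists_nsmul_sum_add_mem_coneHull G (isBounded_ball.sub hA)
  set w := M • ∑ g ∈ G, g
  refine ⟨M, mem_interior.2 ⟨ball (x + w) ε, fun b hb => ?_, isOpen_ball, mem_ball_self hε⟩⟩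
  have hbw : b - w ∈ ball x ε := by
    rwa [mem_ball, dist_eq_norm, sub_sub, add_comm w, ← dist_eq_norm]
  obtain ⟨a, ha, k, hk, hak⟩ := Set.mem_add.1 (interior_subset (hball hbw))
  refine Set.mem_add.2 ⟨a, ha, k + w, hM k (Set.mem_sub.2 ⟨b - w, hbw, a, ha, ?_⟩) hk, ?_⟩
  · rw [← hak, add_sub_cancel_left]
  · rw [← add_assoc, hak, sub_add_cancel]

end Normed

/-- Let `N` be a lattice (modelled as `ℤ^d ⊆ ℝ^d`) and `U = conv(F) + σ₀ ⊆ N_ℝ`, where `F`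
is finite and `σ₀` is the convex cone generated by a finite set `G` of lattice points.
Let `t > 0` with `N ∩ int(tU) = ∅`. Let `N' = N/(N ∩ (σ₀ - σ₀))` be the quotient lattice,
modelled via a linear projection `p : N_ℝ → N'_ℝ` with kernel the subspace `σ₀ - σ₀`
(the span of differences of elements of `σ₀`) mapping `N` onto `N'`, and let `U' = p(U)`.
Then `N' ∩ int(tU') = ∅`. -/
theorem stmt_5 (d d' : ℕ) (F G : Finset (Fin d → ℝ))
    (hG : (G : Set (Fin d → ℝ)) ⊆ intPts d)
    (U : Set (Fin d → ℝ))
    (hU : U = {x | ∃ p ∈ convexHull ℝ (F : Set (Fin d → ℝ)),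
      ∃ s ∈ coneHull (G : Set (Fin d → ℝ)), x = p + s})
    (t : ℝ) (ht : 0 < t)
    (hdisj : intPts d ∩ interior (t • U) = ∅)
    (p : (Fin d → ℝ) →ₗ[ℝ] (Fin d' → ℝ))
    (hker : LinearMap.ker p = Submodule.span ℝ
      {x | ∃ u ∈ coneHull (G : Set (Fin d → ℝ)),
        ∃ v ∈ coneHull (G : Set (Fin d → ℝ)), x = u - v})
    (hlat : p '' intPts d = intPts d') :
    intPts d' ∩ interior (t • (p '' U)) = ∅ := by
  set A := convexHull ℝ (F : Set (Fin d → ℝ))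
  have htU : t • U = t • A + coneHull (G : Set (Fin d → ℝ)) := by
    rw [← smul_coneHull ht, ← smul_add, hU]
    congr 1
    ext x
    simp only [Set.mem_ofPred_eq, Set.mem_add, eq_comm]
  have hkerG : LinearMap.ker p = span ℝ G := hker.trans (span_sub_coneHull _)
  refine Set.eq_empty_of_forall_notMem ?_
  rintro _ ⟨hy, hyU⟩
  rw [← hlat] at hy
  obtain ⟨x, hx, rfl⟩ := hy
  have hxU : x ∈ interior (t • A + (span ℝ (G : Set (Fin d → ℝ)) : Set (Fin d → ℝ))) := by
    refine interior_mono ?_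
      (preimage_interior_subset_interior_preimage p.continuous_of_finiteDimensional hyU)
    rw [← image_smul_set, htU, ← hkerG]
    exact p.preimage_image_add_subset_add_ker (hkerG ▸ coneHull_subset_span)
  obtain ⟨M, hM⟩ := exists_nsmul_sum_add_mem_interior_add_coneHull
    ((isBounded_convexHull.2 F.finite_toSet.isBounded).smul₀ t) G hxU
  have hxw : x + M • ∑ g ∈ G, g ∈ intPtsAddSubgroup d :=
    add_mem hx (nsmul_mem (sum_mem fun g hg => hG hg) M)
  exact hdisj.subset ⟨hxw, htU ▸ hM⟩
end

section
/- Let V be a finite-dimensional real vector space, σ ⊆ V a polyhedral convex cone (the ℝ_{≥0}-span of a finite set) with σ ∩ (−σ) = {0}, and φ ∈ V* a nonzero linear functional. Then the extreme rays of the cone σ ∩ {x ∈ V : φ(x) ≥ 0} are exactly: (i) the extreme rays of σ contained in {φ ≥ 0}, together with (ii) the rays ℝ_{≥0}(φ(e₂)e₁ − φ(e₁)e₂), where ℝ_{≥0}e₁ and ℝ_{≥0}e₂ are extreme rays of σ with φ(e₁) < 0 < φ(e₂) such that ℝ_{≥0}e₁ + ℝ_{≥0}e₂ is a two-dimensional face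 of σ. -/
open Pointwise

/-- The ray `ℝ_{≥0}·v`. -/
def rayOf {V : Type*} [AddCommGroup V] [Module ℝ V] (v : V) : Set V :=
  {x | ∃ c : ℝ, 0 ≤ c ∧ x = c • v}

/-- `r` is an extreme ray of `K`: `r` is a ray (for some `v ≠ 0`) and an extreme
(face) subset of `K`. -/
def IsExtremeRay {V : Type*} [AddCommGroup V] [Module ℝ V] (K r : Set V) : Prop :=
  (∃ v : V, v ≠ 0 ∧ r = rayOf v) ∧ IsExtreme ℝ K r

/-!
An extreme ray `ℝ≥0 v` of `K = σ ∩ {φ ≥ 0}` with `φ v > 0` is already extreme in `σ`: if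
`v = x + y` in `σ` with `φ x < 0`, moving part of `y` onto `x` splits `v` inside `K` with one
summand in `ker φ`, which forces `x ∈ -σ`. If `φ v = 0` and the ray is not extreme in `σ`, look at
the face `F = {x ∈ σ | c v - x ∈ σ for some c ≥ 0}` of `σ` through `v`. Then `F ∩ ker φ` is the
ray itself, so `F` lies in a plane and is generated by the generators of `σ` it contains. On each
side of `ker φ` take the generator minimising `ψ / |φ|`, for a functional `ψ` with `ψ v = 1`: these
two span `F`, which is therefore the 2-dimensional face `ℝ≥0 e₁ + ℝ≥0 e₂`. Conversely, a ray of
type (ii) is `F ∩ ker φ` for such a face `F`, an intersection of faces of `K`.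
-/

theorem finrank_span_pair {K V : Type*} [Field K] [AddCommGroup V] [Module K V] {a b : V}
    (h : LinearIndependent K ![a, b]) :
    Module.finrank K (Submodule.span K ({a, b} : Set V)) = 2 := by
  have := finrank_span_eq_card h
  rwa [Matrix.range_cons_cons_empty, Fintype.card_fin] at this

theorem smul_sub_smul_ne_zero {K V : Type*} [Field K] [AddCommGroup V] [Module K V] {a b : V}
    (h : LinearIndependent K ![a, b]) {φ : Module.Dual K V} (hb : φ b ≠ 0) :
    φ b • a - φ a • b ≠ 0 := fun h0 =>
  hb (LinearIndependent.pair_iff.mp h _ (-φ a) (by rw [← h0]; module)).1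

namespace PointedCone

variable {𝕜 M : Type*} [Field 𝕜] [LinearOrder 𝕜] [IsStrictOrderedRing 𝕜]
  [AddCommGroup M] [Module 𝕜 M]

theorem mem_hull_singleton {v x : M} : x ∈ hull 𝕜 {v} ↔ ∃ c : 𝕜, 0 ≤ c ∧ c • v = x := by
  simp [Submodule.mem_span_singleton, Subtype.exists, Nonneg.mk_smul]

theorem mem_hull_pair {a b x : M} :
    x ∈ hull 𝕜 {a, b} ↔ ∃ s t : 𝕜, 0 ≤ s ∧ 0 ≤ t ∧ s • a + t • b = x := by
  simp [Submodule.mem_span_pair, Subtype.exists, Nonneg.mk_smul]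

theorem isFaceOf_iff_isExtreme {F C : PointedCone 𝕜 M} :
    F.IsFaceOf C ↔ IsExtreme 𝕜 (C : Set M) F := by
  refine ⟨IsFaceOf.isExtreme, fun h => .of_mem_of_add_mem_left h.1 fun {x y} hx hy hxy => ?_⟩
  have hseg : x + y ∈ openSegment 𝕜 ((2 : 𝕜) • x) ((2 : 𝕜) • y) :=
    ⟨2⁻¹, 2⁻¹, by positivity, by positivity, by norm_num, by module⟩
  simpa [smul_mem_iff F (two_pos : (0 : 𝕜) < 2)] using
    h.2 (C.smul_mem zero_le_two hx) (C.smul_mem zero_le_two hy) hxy hseg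

def halfspace (φ : Module.Dual 𝕜 M) : PointedCone 𝕜 M := (positive 𝕜 𝕜).comap φ

@[simp]
theorem mem_halfspace {φ : Module.Dual 𝕜 M} {x : M} : x ∈ halfspace φ ↔ 0 ≤ φ x := Iff.rfl

theorem isFaceOf_ker_halfspace (φ : Module.Dual 𝕜 M) :
    (ofSubmodule (LinearMap.ker φ)).IsFaceOf (halfspace φ) := by
  refine .of_mem_of_add_mem_left (fun x (hx : φ x = 0) => hx.symm.le)
    fun {x y} (hx : 0 ≤ φ x) (hy : 0 ≤ φ y) (hxy : φ (x + y) = 0) => ?_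
  show φ x = 0
  rw [map_add] at hxy
  linarith

theorem hull_pair_inf_ker {φ : Module.Dual 𝕜 M} {a b : M} (ha : φ a < 0) (hb : 0 < φ b) :
    hull 𝕜 {a, b} ⊓ ofSubmodule (LinearMap.ker φ) = hull 𝕜 {φ b • a - φ a • b} := by
  ext x
  simp only [Submodule.mem_inf, mem_hull_pair, mem_hull_singleton, mem_ofSubmodule_iff,
    LinearMap.mem_ker]
  constructor
  · rintro ⟨⟨s, t, hs, ht, rfl⟩, hx⟩
    simp only [map_add, map_smul, smul_eq_mul] at hx
    refine ⟨t / -φ a, div_nonneg ht (by linarith), ?_⟩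
    have := ha.ne
    match_scalars
    · field_simp
      linear_combination -hx
    · field_simp
  · rintro ⟨c, hc, rfl⟩
    refine ⟨⟨c * φ b, c * -φ a, by positivity, mul_nonneg hc (by linarith), by module⟩, ?_⟩
    simp only [map_smul, map_sub, smul_eq_mul]
    ring

variable {C F : PointedCone 𝕜 M} {φ : Module.Dual 𝕜 M} {v x : M}

theorem IsFaceOf.apply_nonneg_of_add_mem (hC : (C : ConvexCone 𝕜 M).Salient)
    (hF : F.IsFaceOf (C ⊓ halfspace φ)) (hker : ∀ x ∈ F, φ x = 0 → x = 0) {x y : M}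
    (hx : x ∈ C) (hy : y ∈ C) (hxy : x + y ∈ F) : 0 ≤ φ x := by
  by_contra! hφx
  have hx0 : x ≠ 0 := by rintro rfl; simp at hφx
  have hφxy : 0 < φ (x + y) := by
    refine (mem_halfspace.mp (hF.le hxy).2).lt_of_ne' fun h => hC x hx hx0 ?_
    rw [neg_eq_of_add_eq_zero_right (hker _ hxy h)]
    exact hy
  rw [map_add] at hφxy
  have hφy : 0 < φ y := by linarith
  -- shift part of `y` onto `x` so that both summands lie in `C ⊓ halfspace φ`
  set s := -φ x / φ y
  have hs : 0 < s := div_pos (by linarith) hφy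
  have hs1 : s < 1 := (div_lt_one hφy).mpr (by linarith)
  have hφx' : φ (x + s • y) = 0 := by
    simp only [map_add, map_smul, smul_eq_mul, s]
    field_simp
    ring
  have hx' : x + s • y ∈ C ⊓ halfspace φ := ⟨C.add_mem hx (C.smul_mem hs.le hy), hφx'.symm.le⟩
  have hy' : (1 - s) • y ∈ C ⊓ halfspace φ := by
    refine ⟨C.smul_mem (by linarith) hy, ?_⟩
    show 0 ≤ φ ((1 - s) • y)
    rw [map_smul, smul_eq_mul]
    nlinarith
  have hsum : (x + s • y) + (1 - s) • y = x + y := by module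
  have hx'0 := hker _ (hF.mem_of_add_mem_left hx' hy' (hsum ▸ hxy)) hφx'
  refine hC x hx hx0 ?_
  rw [neg_eq_of_add_eq_zero_right hx'0]
  exact C.smul_mem hs.le hy

theorem IsFaceOf.of_inf_halfspace (hC : (C : ConvexCone 𝕜 M).Salient)
    (hF : F.IsFaceOf (C ⊓ halfspace φ)) (hker : ∀ x ∈ F, φ x = 0 → x = 0) : F.IsFaceOf C :=
  .of_mem_of_add_mem_left (hF.le.trans inf_le_left) fun hx hy hxy =>
    hF.mem_of_add_mem_left ⟨hx, hF.apply_nonneg_of_add_mem hC hker hx hy hxy⟩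
      ⟨hy, hF.apply_nonneg_of_add_mem hC hker hy hx (by rwa [add_comm])⟩ hxy

theorem linearIndependent_pair_of_salient (hC : (C : ConvexCone 𝕜 M).Salient) {a b : M}
    (ha : a ∈ C) (hb : b ∈ C) (hφa : φ a < 0) (hφb : 0 < φ b) :
    LinearIndependent 𝕜 ![a, b] := by
  have ha0 : a ≠ 0 := by rintro rfl; simp at hφa
  refine (LinearIndependent.pair_iff' ha0).mpr fun c hc => ?_
  have hc0 : c < 0 := by
    have : c * φ a = φ b := by rw [← hc, map_smul, smul_eq_mul]
    nlinarith
  refine hC a ha ha0 ?_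
  have : -a = (-c)⁻¹ • b := by
    rw [← hc, smul_smul, inv_neg, neg_mul, inv_mul_cancel₀ hc0.ne, neg_one_smul]
  rw [this]
  exact C.smul_mem (by simp [hc0.le]) hb

theorem IsFaceOf.hull_singleton_of_inf_halfspace (hC : (C : ConvexCone 𝕜 M).Salient)
    (hR : (hull 𝕜 {v}).IsFaceOf (C ⊓ halfspace φ)) (hφv : φ v ≠ 0) :
    (hull 𝕜 {v}).IsFaceOf C := by
  refine hR.of_inf_halfspace hC fun x hx hx0 => ?_
  obtain ⟨c, -, rfl⟩ := mem_hull_singleton.mp hx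
  simp_all

theorem isFaceOf_hull_singleton_pair {a b : M} (h : LinearIndependent 𝕜 ![a, b]) :
    (hull 𝕜 {a}).IsFaceOf (hull 𝕜 {a, b}) := by
  refine .of_mem_of_add_mem_left (Submodule.span_mono (by simp)) fun hx hy hxy => ?_
  obtain ⟨s, t, hs, ht, rfl⟩ := mem_hull_pair.mp hx
  obtain ⟨s', t', hs', ht', rfl⟩ := mem_hull_pair.mp hy
  obtain ⟨c, -, hc⟩ := mem_hull_singleton.mp hxy
  have := LinearIndependent.pair_iff.mp h (s + s' - c) (t + t')
    (by rw [← sub_eq_zero.mpr hc.symm]; module)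
  have ht0 : t = 0 := by linarith [this.2]
  exact mem_hull_singleton.mpr ⟨s, hs, by simp [ht0]⟩

theorem IsFaceOf.hull_singleton_left {a b : M} (hP : (hull 𝕜 {a, b}).IsFaceOf C)
    (h : LinearIndependent 𝕜 ![a, b]) : (hull 𝕜 {a}).IsFaceOf C :=
  (isFaceOf_hull_singleton_pair h).trans hP

theorem IsFaceOf.hull_singleton_right {a b : M} (hP : (hull 𝕜 {a, b}).IsFaceOf C)
    (h : LinearIndependent 𝕜 ![a, b]) : (hull 𝕜 {b}).IsFaceOf C :=
  (Set.pair_comm a b ▸ hP).hull_singleton_left (LinearIndependent.pair_symm_iff.mp h)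

theorem IsFaceOf.eq_hull_inter {s : Set M} (hF : F.IsFaceOf (hull 𝕜 s)) :
    F = hull 𝕜 (s ∩ F) := by
  refine le_antisymm (fun x hx => ?_) (Submodule.span_le.mpr Set.inter_subset_right)
  refine Submodule.span_induction (p := fun x _ => x ∈ F → x ∈ hull 𝕜 (s ∩ F))
    (fun y hy hyF => subset_hull ⟨hy, hyF⟩) (fun _ => zero_mem _)
    (fun y z hy hz ihy ihz h => add_mem (ihy (hF.mem_of_add_mem_left hy hz h))
      (ihz (hF.mem_of_add_mem_right hy hz h)))
    (fun ⟨a, ha⟩ y hy ih h => ?_) (hF.le hx) hx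
  rcases ha.eq_or_lt with rfl | ha
  · simp
  · exact Submodule.smul_mem _ _
      (ih (hF.mem_of_smul_add_mem hy (zero_mem _) ha (by simpa using h)))

/-- The face of `C` generated by `v`: the points of `C` lying below a multiple of `v` in the
order defined by `C`. -/
def faceAt (C : PointedCone 𝕜 M) (v : M) : PointedCone 𝕜 M where
  carrier := {x | x ∈ C ∧ ∃ c : 𝕜, 0 ≤ c ∧ c • v - x ∈ C}
  zero_mem' := ⟨C.zero_mem, 0, le_rfl, by simp⟩
  add_mem' := by
    rintro x y ⟨hx, c, hc, hcx⟩ ⟨hy, d, hd, hdy⟩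
    refine ⟨C.add_mem hx hy, c + d, add_nonneg hc hd, ?_⟩
    convert C.add_mem hcx hdy using 1
    module
  smul_mem' := by
    rintro ⟨a, ha⟩ x ⟨hx, c, hc, hcx⟩
    refine ⟨C.smul_mem ha hx, a * c, mul_nonneg ha hc, ?_⟩
    convert C.smul_mem ha hcx using 1
    simp only [Nonneg.mk_smul]
    module

theorem isFaceOf_faceAt (C : PointedCone 𝕜 M) (v : M) : (faceAt C v).IsFaceOf C := by
  refine .of_mem_of_add_mem_left (fun x hx => hx.1) fun {x y} hx hy ⟨_, c, hc, hcxy⟩ => ?_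
  refine ⟨hx, c, hc, ?_⟩
  convert C.add_mem hcxy hy using 1
  abel

theorem mem_faceAt_self (hv : v ∈ C) : v ∈ faceAt C v :=
  ⟨hv, 1, zero_le_one, by simp⟩

theorem sub_mem_faceAt (hx : x ∈ faceAt C v) : ∃ c : 𝕜, 0 ≤ c ∧ c • v - x ∈ faceAt C v := by
  obtain ⟨hxC, c, hc, hcx⟩ := hx
  exact ⟨c, hc, hcx, c, hc, by simpa using hxC⟩

theorem faceAt_inf_ker (hR : (hull 𝕜 {v}).IsFaceOf (C ⊓ halfspace φ)) (hφv : φ v = 0) :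
    faceAt C v ⊓ ofSubmodule (LinearMap.ker φ) = hull 𝕜 {v} := by
  refine le_antisymm ?_ (Submodule.span_le.mpr (Set.singleton_subset_iff.mpr
    ⟨mem_faceAt_self (hR.le (subset_hull rfl)).1, hφv⟩))
  rintro x ⟨⟨hxC, c, hc, hcx⟩, hφx : φ x = 0⟩
  refine hR.mem_of_add_mem_left (y := c • v - x) ⟨hxC, hφx.symm.le⟩ ⟨hcx, by simp [hφv, hφx]⟩ ?_
  rw [add_sub_cancel]
  exact smul_mem _ hc (subset_hull rfl)

theorem exists_mem_faceAt_lt_zero_lt (hR : (hull 𝕜 {v}).IsFaceOf (C ⊓ halfspace φ))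
    (hφv : φ v = 0) (hnot : ¬ (hull 𝕜 {v}).IsFaceOf C) :
    ∃ p ∈ faceAt C v, ∃ q ∈ faceAt C v, φ p < 0 ∧ 0 < φ q := by
  have hGv := faceAt_inf_ker hR hφv
  obtain ⟨x, hxG, hxv⟩ : ∃ x ∈ faceAt C v, x ∉ hull 𝕜 {v} := by
    by_contra! h
    exact hnot (le_antisymm h (hGv ▸ inf_le_left) ▸ isFaceOf_faceAt C v)
  have hφx : φ x ≠ 0 := fun h => hxv (hGv.le ⟨hxG, h⟩)
  obtain ⟨c, -, hyG⟩ := sub_mem_faceAt hxG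
  have hφy : φ (c • v - x) = -φ x := by simp [hφv]
  rcases hφx.lt_or_gt with h | h
  · exact ⟨x, hxG, _, hyG, h, by linarith⟩
  · exact ⟨_, hyG, x, hxG, by linarith, h⟩

/-- Scaled to `φ = 1`, the points of `G` with `φ > 0` lie on one line parallel to `v`, along
which `ψ` is a coordinate; `g` lies above `e` on it. -/
theorem mem_hull_pair_of_div_le {G : PointedCone 𝕜 M} {ψ : Module.Dual 𝕜 M} {e g h : M}
    (hG : ∀ x ∈ G, φ x = 0 → x ∈ 𝕜 ∙ v) (hψ : ψ v = 1) (he : e ∈ G) (hg : g ∈ G) (hh : h ∈ G)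
    (hφe : 0 < φ e) (hφg : 0 < φ g) (hφh : φ h < 0) (hle : ψ e / φ e ≤ ψ g / φ g) :
    g ∈ hull 𝕜 {e, v} := by
  have hline : ∀ x ∈ G, 0 < φ x → φ x • h - φ h • x ∈ 𝕜 ∙ v := by
    intro x hx hφx
    refine hG _ ?_ (by simp only [map_sub, map_smul, smul_eq_mul]; ring)
    rw [sub_eq_add_neg, ← neg_smul]
    exact G.add_mem (G.smul_mem hφx.le hh) (G.smul_mem (by linarith) hx)
  have hdiff : φ e • g - φ g • e ∈ 𝕜 ∙ v := by
    have : φ h • (φ e • g - φ g • e) = φ g • (φ e • h - φ h • e) - φ e • (φ g • h - φ h • g) := by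
      module
    rw [← Submodule.smul_mem_iff _ hφh.ne, this]
    exact sub_mem (Submodule.smul_mem _ _ (hline e he hφe))
      (Submodule.smul_mem _ _ (hline g hg hφg))
  obtain ⟨c, hc⟩ := Submodule.mem_span_singleton.mp hdiff
  have hcψ : c = φ e * ψ g - φ g * ψ e := by simpa [hψ] using congrArg ψ hc
  have hc0 : 0 ≤ c := by
    rw [div_le_div_iff₀ hφe hφg] at hle
    linarith
  refine mem_hull_pair.mpr ⟨φ g / φ e, c / φ e, by positivity, by positivity, ?_⟩
  have : (φ g / φ e) • e + (c / φ e) • v = (φ e)⁻¹ • (φ g • e + c • v) := by module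
  rw [this, hc, add_sub_cancel, inv_smul_smul₀ hφe.ne']

theorem mem_hull_pair_of_ker {G : PointedCone 𝕜 M} (hG : (G : ConvexCone 𝕜 M).Salient)
    (hker : ∀ x ∈ G, φ x = 0 → x ∈ hull 𝕜 {v}) {e₁ e₂ : M} (he₁ : e₁ ∈ G) (he₂ : e₂ ∈ G)
    (hφe₁ : φ e₁ < 0) (hφe₂ : 0 < φ e₂) : v ∈ hull 𝕜 {e₁, e₂} := by
  have hw : φ e₂ • e₁ - φ e₁ • e₂ ∈ hull 𝕜 {e₁, e₂} :=
    mem_hull_pair.mpr ⟨φ e₂, -φ e₁, hφe₂.le, by linarith, by module⟩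
  have hwG : φ e₂ • e₁ - φ e₁ • e₂ ∈ G :=
    Submodule.span_le.mpr (Set.insert_subset he₁ (Set.singleton_subset_iff.mpr he₂)) hw
  have hw0 := smul_sub_smul_ne_zero (linearIndependent_pair_of_salient hG he₁ he₂ hφe₁ hφe₂)
    hφe₂.ne'
  obtain ⟨c, hc, hcw⟩ := mem_hull_singleton.mp
    (hker _ hwG (by simp only [map_sub, map_smul, smul_eq_mul]; ring))
  have hc0 : c ≠ 0 := by
    rintro rfl
    exact hw0 (by simpa using hcw.symm)
  rw [← inv_smul_smul₀ hc0 v, hcw]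
  exact smul_mem _ (inv_nonneg.mpr hc) hw

theorem exists_eq_hull_pair {G : PointedCone 𝕜 M} {T : Set M} (hT : T.Finite)
    (hGT : G = hull 𝕜 T) (hG : (G : ConvexCone 𝕜 M).Salient) (hv : v ≠ 0)
    (hker : ∀ x ∈ G, φ x = 0 → x ∈ hull 𝕜 {v})
    (hneg : ∃ t ∈ T, φ t < 0) (hpos : ∃ t ∈ T, 0 < φ t) :
    ∃ e₁ ∈ T, ∃ e₂ ∈ T, φ e₁ < 0 ∧ 0 < φ e₂ ∧ G = hull 𝕜 {e₁, e₂} := by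
  obtain ⟨ψ, hψ⟩ := Module.Projective.exists_dual_eq_one 𝕜 hv
  have hTG : T ⊆ G := hGT ▸ subset_hull
  have hline : ∀ x ∈ G, φ x = 0 → x ∈ 𝕜 ∙ v := fun x hx h => hull_le_span 𝕜 {v} (hker x hx h)
  obtain ⟨e₁, ⟨he₁T, hφe₁⟩, he₁⟩ := Set.exists_min_image {t ∈ T | φ t < 0} (fun t => ψ t / -φ t)
    (hT.subset (Set.sep_subset _ _)) hneg
  obtain ⟨e₂, ⟨he₂T, hφe₂⟩, he₂⟩ := Set.exists_min_image {t ∈ T | 0 < φ t} (fun t => ψ t / φ t)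
    (hT.subset (Set.sep_subset _ _)) hpos
  have hv₁₂ := mem_hull_pair_of_ker hG hker (hTG he₁T) (hTG he₂T) hφe₁ hφe₂
  have hsub : ∀ {a}, a ∈ hull 𝕜 {e₁, e₂} → hull 𝕜 {a, v} ≤ hull 𝕜 {e₁, e₂} := fun ha =>
    Submodule.span_le.mpr (Set.insert_subset ha (Set.singleton_subset_iff.mpr hv₁₂))
  refine ⟨e₁, he₁T, e₂, he₂T, hφe₁, hφe₂, le_antisymm ?_ (Submodule.span_le.mpr
    (Set.insert_subset (hTG he₁T) (Set.singleton_subset_iff.mpr (hTG he₂T))))⟩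
  rw [hGT]
  refine Submodule.span_le.mpr fun t ht => ?_
  rcases lt_trichotomy (φ t) 0 with h | h | h
  · refine hsub (subset_hull (by simp)) (mem_hull_pair_of_div_le (φ := -φ)
      (fun x hx h0 => hline x hx (neg_eq_zero.mp h0)) hψ (hTG he₁T) (hTG ht) (hTG he₂T)
      (by simpa) (by simpa) (by simpa) (he₁ t ⟨ht, h⟩))
  · obtain ⟨c, hc, rfl⟩ := mem_hull_singleton.mp (hker t (hTG ht) h)
    exact smul_mem _ hc hv₁₂
  · exact hsub (subset_hull (by simp)) (mem_hull_pair_of_div_le hline hψ (hTG he₂T) (hTG ht)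
      (hTG he₁T) hφe₂ h hφe₁ (he₂ t ⟨ht, h⟩))

theorem exists_mem_lt_zero_of_mem_hull {T : Set M} (hx : x ∈ hull 𝕜 T) (hφx : φ x < 0) :
    ∃ t ∈ T, φ t < 0 := by
  by_contra! h
  exact hφx.not_ge ((Submodule.span_le.mpr h : hull 𝕜 T ≤ halfspace φ) hx)

theorem exists_isFaceOf_hull_pair {S : Set M} (hS : S.Finite)
    (hC : (hull 𝕜 S : ConvexCone 𝕜 M).Salient) (hv : v ≠ 0) (hφv : φ v = 0)
    (hR : (hull 𝕜 {v}).IsFaceOf (hull 𝕜 S ⊓ halfspace φ))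
    (hnot : ¬ (hull 𝕜 {v}).IsFaceOf (hull 𝕜 S)) :
    ∃ e₁ e₂, φ e₁ < 0 ∧ 0 < φ e₂ ∧ (hull 𝕜 {e₁, e₂}).IsFaceOf (hull 𝕜 S) ∧
      hull 𝕜 {v} = hull 𝕜 {φ e₂ • e₁ - φ e₁ • e₂} := by
  have hGface := isFaceOf_faceAt (hull 𝕜 S) v
  have hGv := faceAt_inf_ker hR hφv
  obtain ⟨p, hpG, q, hqG, hφp, hφq⟩ := exists_mem_faceAt_lt_zero_lt hR hφv hnot
  have hGT := hGface.eq_hull_inter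
  have hneg := exists_mem_lt_zero_of_mem_hull (hGT ▸ hpG) hφp
  obtain ⟨t, ht, hφt⟩ := exists_mem_lt_zero_of_mem_hull (φ := -φ) (hGT ▸ hqG) (by simpa)
  obtain ⟨e₁, -, e₂, -, hφe₁, hφe₂, hG⟩ := exists_eq_hull_pair (hS.inter_of_left _) hGT
    (hC.anti hGface.le) hv (fun x hx h => hGv.le ⟨hx, h⟩) hneg ⟨t, ht, by simpa using hφt⟩
  refine ⟨e₁, e₂, hφe₁, hφe₂, hG ▸ hGface, ?_⟩
  rw [← hull_pair_inf_ker hφe₁ hφe₂, ← hG, hGv]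

end PointedCone

open PointedCone

section

variable {V : Type*} [AddCommGroup V] [Module ℝ V] {C : PointedCone ℝ V} {φ : Module.Dual ℝ V}

theorem coneHull_eq_hull (s : Set V) :
    coneHull s = hull ℝ s := by
  ext x
  constructor
  · rintro ⟨n, c, v, hc, hv, rfl⟩
    exact Submodule.sum_mem _ fun i _ => smul_mem _ (hc i) (subset_hull (hv i))
  · intro hx
    obtain ⟨c, hcs, hc, rfl⟩ := mem_hull_set.mp hx
    let e := c.support.equivFin
    refine ⟨c.support.card, fun i => c (e.symm i), fun i => e.symm i, fun i => hc _,
      fun i => hcs (e.symm i).2, ?_⟩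
    rw [Finsupp.sum, ← Finset.sum_coe_sort, ← e.symm.sum_comp]

theorem rayOf_eq_hull (v : V) :
    rayOf v = hull ℝ {v} := by
  ext x
  simp [rayOf, mem_hull_singleton, eq_comm]

theorem isExtremeRay_rayOf_iff {K : PointedCone ℝ V} {v : V} (hv : v ≠ 0) :
    IsExtremeRay K (rayOf v) ↔ (hull ℝ {v}).IsFaceOf K := by
  rw [IsExtremeRay, rayOf_eq_hull, isFaceOf_iff_isExtreme]
  exact and_iff_right ⟨v, hv, (rayOf_eq_hull v).symm⟩

theorem IsExtremeRay.inf_halfspace {r : Set V} (hr : IsExtremeRay C r)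
    (hrφ : r ⊆ {x | 0 ≤ φ x}) : IsExtremeRay ↑(C ⊓ halfspace φ) r := by
  obtain ⟨v, hv, rfl⟩ := hr.1
  rw [isExtremeRay_rayOf_iff hv] at hr ⊢
  rw [rayOf_eq_hull] at hrφ
  have hvH : hull ℝ {v} ⊓ halfspace φ = hull ℝ {v} := inf_eq_left.mpr hrφ
  exact hvH ▸ hr.inf (IsFaceOf.refl (halfspace φ))

theorem isExtremeRay_inf_halfspace_rayOf (hC : (C : ConvexCone ℝ V).Salient) {e₁ e₂ : V}
    (hP : (hull ℝ {e₁, e₂}).IsFaceOf C) (hφe₁ : φ e₁ < 0) (hφe₂ : 0 < φ e₂) :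
    IsExtremeRay ↑(C ⊓ halfspace φ) (rayOf (φ e₂ • e₁ - φ e₁ • e₂)) := by
  have hli := linearIndependent_pair_of_salient hC (hP.le (subset_hull (by simp)))
    (hP.le (subset_hull (by simp))) hφe₁ hφe₂
  rw [isExtremeRay_rayOf_iff (smul_sub_smul_ne_zero hli hφe₂.ne'), ← hull_pair_inf_ker hφe₁ hφe₂]
  exact hP.inf (isFaceOf_ker_halfspace φ)

theorem exists_isExtremeRay_pair {S : Set V} (hS : S.Finite)
    (hC : (hull ℝ S : ConvexCone ℝ V).Salient) {v : V} (hv : v ≠ 0)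
    (hR : (hull ℝ {v}).IsFaceOf (hull ℝ S ⊓ halfspace φ))
    (hnot : ¬ (hull ℝ {v}).IsFaceOf (hull ℝ S)) :
    ∃ e₁ e₂ : V, IsExtremeRay ↑(hull ℝ S) (rayOf e₁) ∧ IsExtremeRay ↑(hull ℝ S) (rayOf e₂) ∧
      φ e₁ < 0 ∧ 0 < φ e₂ ∧ (hull ℝ {e₁, e₂}).IsFaceOf (hull ℝ S) ∧
      Module.finrank ℝ (Submodule.span ℝ ({e₁, e₂} : Set V)) = 2 ∧
      rayOf v = rayOf (φ e₂ • e₁ - φ e₁ • e₂) := by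
  have hφv : φ v = 0 := by
    by_contra h
    exact hnot (hR.hull_singleton_of_inf_halfspace hC h)
  obtain ⟨e₁, e₂, hφe₁, hφe₂, hP, hray⟩ := exists_isFaceOf_hull_pair hS hC hv hφv hR hnot
  have hli := linearIndependent_pair_of_salient hC (hP.le (subset_hull (by simp)))
    (hP.le (subset_hull (by simp))) hφe₁ hφe₂
  exact ⟨e₁, e₂, (isExtremeRay_rayOf_iff (hli.ne_zero 0)).mpr (hP.hull_singleton_left hli),
    (isExtremeRay_rayOf_iff (hli.ne_zero 1)).mpr (hP.hull_singleton_right hli), hφe₁, hφe₂, hP,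
    finrank_span_pair hli, by rw [rayOf_eq_hull, rayOf_eq_hull, hray]⟩

end

theorem stmt_7_general {V : Type*} [AddCommGroup V] [Module ℝ V]
    (S : Finset V) (σ : Set V) (hσ : σ = coneHull (S : Set V))
    (hpointed : σ ∩ (-σ) = {0})
    (φ : Module.Dual ℝ V) (r : Set V) :
    IsExtremeRay (σ ∩ {x | 0 ≤ φ x}) r ↔
      ((IsExtremeRay σ r ∧ r ⊆ {x | 0 ≤ φ x}) ∨
        (∃ e₁ e₂ : V, IsExtremeRay σ (rayOf e₁) ∧ IsExtremeRay σ (rayOf e₂) ∧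
          φ e₁ < 0 ∧ 0 < φ e₂ ∧
          IsExtreme ℝ σ (coneHull ({e₁, e₂} : Set V)) ∧
          Module.finrank ℝ (Submodule.span ℝ ({e₁, e₂} : Set V)) = 2 ∧
          r = rayOf (φ e₂ • e₁ - φ e₁ • e₂))) := by
  set C := hull ℝ (S : Set V)
  have hσC : σ = C := hσ.trans (coneHull_eq_hull _)
  have hC : (C : ConvexCone ℝ V).Salient :=
    (salient_iff_inter_neg_eq_singleton C).mpr (hσC ▸ hpointed)
  have hK : σ ∩ {x | 0 ≤ φ x} = ↑(C ⊓ halfspace φ) := by rw [hσC]; rfl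
  rw [hK]
  simp only [hσC, coneHull_eq_hull, ← isFaceOf_iff_isExtreme]
  constructor
  · intro hr
    obtain ⟨v, hv, rfl⟩ := hr.1
    rw [isExtremeRay_rayOf_iff hv] at hr
    by_cases hface : (hull ℝ {v}).IsFaceOf C
    · exact .inl ⟨(isExtremeRay_rayOf_iff hv).mpr hface,
        rayOf_eq_hull v ▸ fun x hx => (hr.le hx).2⟩
    · exact .inr (exists_isExtremeRay_pair S.finite_toSet hC hv hr hface)
  · rintro (⟨hr, hrφ⟩ | ⟨e₁, e₂, -, -, hφe₁, hφe₂, hP, -, rfl⟩)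
    · exact hr.inf_halfspace hrφ
    · exact isExtremeRay_inf_halfspace_rayOf hC hP hφe₁ hφe₂

/-- Let `V` be a finite-dimensional real vector space, `σ ⊆ V` a polyhedral convex cone
with `σ ∩ (-σ) = {0}`, and `φ ∈ V*` a nonzero linear functional. Then the extreme rays of
`σ ∩ {φ ≥ 0}` are exactly: (i) the extreme rays of `σ` contained in `{φ ≥ 0}`, together
with (ii) the rays `ℝ_{≥0}(φ(e₂)e₁ - φ(e₁)e₂)`, where `ℝ_{≥0}e₁`, `ℝ_{≥0}e₂` are extreme
rays of `σ` with `φ(e₁) < 0 < φ(e₂)` such that `ℝ_{≥0}e₁ + ℝ_{≥0}e₂` is a two-dimensional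
face of `σ`. -/
theorem stmt_7 {V : Type*} [AddCommGroup V] [Module ℝ V] [FiniteDimensional ℝ V]
    (S : Finset V) (σ : Set V) (hσ : σ = coneHull (S : Set V))
    (hpointed : σ ∩ (-σ) = {0})
    (φ : Module.Dual ℝ V) (hφ : φ ≠ 0) (r : Set V) :
    IsExtremeRay (σ ∩ {x | 0 ≤ φ x}) r ↔
      ((IsExtremeRay σ r ∧ r ⊆ {x | 0 ≤ φ x}) ∨
        (∃ e₁ e₂ : V, IsExtremeRay σ (rayOf e₁) ∧ IsExtremeRay σ (rayOf e₂) ∧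
          φ e₁ < 0 ∧ 0 < φ e₂ ∧
          IsExtreme ℝ σ (coneHull ({e₁, e₂} : Set V)) ∧
          Module.finrank ℝ (Submodule.span ℝ ({e₁, e₂} : Set V)) = 2 ∧
          r = rayOf (φ e₂ • e₁ - φ e₁ • e₂))) :=
  stmt_7_general S σ hσ hpointed φ r
end

section
/- Let N_ℝ be a finite-dimensional real vector space with dual M_ℝ, and let □ ⊆ M_ℝ be a nonempty set with support function h_□(e) = inf_{m∈□} ⟨m,e⟩. Let φ ∈ M_ℝ and a, b > 0 with φ/a ∈ □ and −φ/b ∈ □; set w = a + b. Let e₁, e₂ ∈ N_ℝ with ⟨φ, e₁⟩ < 0 < ⟨φ, e₂⟩ and with h_□(e₁), h_□(e₂) finite, and let q > 0 and e' = (⟨φ,e₂⟩·e₁ − ⟨φ,e₁⟩·e₂)/q. Then −h_□(e') ≤ (w/q)·(−h_□(e₁))·(−h_□(e₂)). In particular, if −h_□(e₁) ≤ 1 and −h_□(e₂) ≤ 1 and q ≥ 1, then −h_□(e') ≤ w. -/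
/-- Let `N_ℝ` be a finite-dimensional real vector space with dual `M_ℝ`, and `□ ⊆ M_ℝ`
nonempty with support function `h_□(e) = inf_{m ∈ □} ⟨m, e⟩`. Let `φ ∈ M_ℝ` and `a, b > 0`
with `φ/a ∈ □` and `-φ/b ∈ □`; set `w = a + b`. Let `e₁, e₂ ∈ N_ℝ` with
`⟨φ, e₁⟩ < 0 < ⟨φ, e₂⟩` and with `h_□(e₁) = h1`, `h_□(e₂) = h2` finite (encoded as
greatest lower bounds), let `q > 0` and `e' = (⟨φ,e₂⟩·e₁ - ⟨φ,e₁⟩·e₂)/q`. Then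
`-h_□(e') ≤ (w/q)·(-h1)·(-h2)`, i.e. `⟨m, e'⟩ ≥ -(w/q)·(-h1)·(-h2)` for all `m ∈ □`.
In particular, if `-h1 ≤ 1`, `-h2 ≤ 1` and `q ≥ 1`, then `-h_□(e') ≤ w`. -/
theorem stmt_9 {V : Type*} [AddCommGroup V] [Module ℝ V] [FiniteDimensional ℝ V]
    (box : Set (Module.Dual ℝ V)) (hbox : box.Nonempty)
    (φ : Module.Dual ℝ V) (a b w : ℝ) (ha : 0 < a) (hb : 0 < b) (hw : w = a + b)
    (hφa : a⁻¹ • φ ∈ box) (hφb : -(b⁻¹ • φ) ∈ box)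
    (e₁ e₂ : V) (he₁ : φ e₁ < 0) (he₂ : 0 < φ e₂)
    (h1 h2 : ℝ)
    (hglb1 : IsGLB ((fun m : Module.Dual ℝ V => m e₁) '' box) h1)
    (hglb2 : IsGLB ((fun m : Module.Dual ℝ V => m e₂) '' box) h2)
    (q : ℝ) (hq : 0 < q) (e' : V)
    (he' : e' = q⁻¹ • (φ e₂ • e₁ - φ e₁ • e₂)) :
    (∀ m ∈ box, -(w / q * -h1 * -h2) ≤ m e') ∧
    (-h1 ≤ 1 → -h2 ≤ 1 → 1 ≤ q → ∀ m ∈ box, -w ≤ m e') := by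

  subst hw
  have hA1 : h1 ≤ a⁻¹ * φ e₁ := hglb1.1 ⟨_, hφa, by simp⟩
  have hB1 : h1 ≤ -(b⁻¹ * φ e₁) := hglb1.1 ⟨_, hφb, by simp⟩
  have hA2 : h2 ≤ a⁻¹ * φ e₂ := hglb2.1 ⟨_, hφa, by simp⟩
  have hB2 : h2 ≤ -(b⁻¹ * φ e₂) := hglb2.1 ⟨_, hφb, by simp⟩
  have hφ1 : a * h1 ≤ φ e₁ := by
    have := mul_le_mul_of_nonneg_left hA1 ha.le
    rwa [mul_inv_cancel_left₀ ha.ne'] at this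
  have hφ1' : φ e₁ ≤ -(b * h1) := by
    have := mul_le_mul_of_nonneg_left hB1 hb.le
    rw [mul_neg, mul_inv_cancel_left₀ hb.ne'] at this
    linarith
  have hφ2 : a * h2 ≤ φ e₂ := by
    have := mul_le_mul_of_nonneg_left hA2 ha.le
    rwa [mul_inv_cancel_left₀ ha.ne'] at this
  have hφ2' : φ e₂ ≤ -(b * h2) := by
    have := mul_le_mul_of_nonneg_left hB2 hb.le
    rw [mul_neg, mul_inv_cancel_left₀ hb.ne'] at this
    linarith
  have hh1 : h1 < 0 := by nlinarith
  have hh2 : h2 < 0 := by nlinarith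
  have main : ∀ m ∈ box, -((a + b) / q * -h1 * -h2) ≤ m e' := by
    intro m hm
    have hm1 : h1 ≤ m e₁ := hglb1.1 ⟨m, hm, rfl⟩
    have hm2 : h2 ≤ m e₂ := hglb2.1 ⟨m, hm, rfl⟩
    have hme : m e' = q⁻¹ * (φ e₂ * m e₁ - φ e₁ * m e₂) := by
      rw [he', map_smul, map_sub, map_smul, map_smul]
      simp [smul_eq_mul]
    have key : -((a + b) * -h1 * -h2) ≤ φ e₂ * m e₁ - φ e₁ * m e₂ := by
      have t1 : (-b * h2 - φ e₂) * (-h1) ≥ 0 :=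
        mul_nonneg (by linarith) (by linarith)
      have t2 : (φ e₁ - a * h1) * (-h2) ≥ 0 :=
        mul_nonneg (by linarith) (by linarith)
      have t3 : φ e₂ * (m e₁ - h1) ≥ 0 := mul_nonneg he₂.le (by linarith)
      have t4 : (-φ e₁) * (m e₂ - h2) ≥ 0 :=
        mul_nonneg (by linarith) (by linarith)
      nlinarith [t1, t2, t3, t4]
    rw [hme]
    have heq : -((a + b) / q * -h1 * -h2) = q⁻¹ * (-((a + b) * -h1 * -h2)) := by
      rw [div_eq_mul_inv]; ring
    rw [heq]
    exact mul_le_mul_of_nonneg_left key (inv_nonneg.2 hq.le)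
  refine ⟨main, fun hu1 hu2 hq1 m hm => ?_⟩
  refine le_trans ?_ (main m hm)
  have hwpos : 0 < a + b := by linarith
  have hqi : q⁻¹ ≤ 1 := inv_le_one_of_one_le₀ hq1
  have hqi0 : 0 ≤ q⁻¹ := inv_nonneg.2 hq.le
  have p : 0 ≤ (a + b) * q⁻¹ := mul_nonneg hwpos.le hqi0
  have s1 : (a + b) * q⁻¹ ≤ a + b := by nlinarith
  have s2 : (a + b) * q⁻¹ * -h1 ≤ (a + b) * q⁻¹ := by nlinarith
  have p2 : 0 ≤ (a + b) * q⁻¹ * -h1 := mul_nonneg p (by linarith)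
  have s3 : (a + b) * q⁻¹ * -h1 * -h2 ≤ (a + b) * q⁻¹ * -h1 := by nlinarith
  have : (a + b) / q * -h1 * -h2 ≤ a + b := by rw [div_eq_mul_inv]; linarith
  linarith
end

section
/- Let N_ℝ be a finite-dimensional real vector space with dual M_ℝ, let σ ⊆ N_ℝ be a closed convex cone with dual cone σ^∨ = {m ∈ M_ℝ : ⟨m, e⟩ ≥ 0 for all e ∈ σ}, and let □ ⊆ M_ℝ be a nonempty closed convex set satisfying □ + σ^∨ ⊆ □. Then inf_{m∈□} ⟨m, e⟩ ≤ 0 for every e ∈ σ if and only if 0 ∈ □. -/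
lemma clm_eq_sum (d : ℕ) (f : (Fin d → ℝ) →L[ℝ] ℝ) (m : Fin d → ℝ) :
    f m = ∑ i, m i * f (Pi.single i 1) := by
  have hm : m = ∑ i, m i • (Pi.single i 1 : Fin d → ℝ) := by
    ext j
    simp [Finset.sum_apply, Pi.single_apply]
  conv_lhs => rw [hm]
  simp [smul_eq_mul]


/-- Let `N_ℝ` be a finite-dimensional real vector space with dual `M_ℝ` (modelled as
`ℝ^d` paired with itself by `⟨m, e⟩ = ∑ i, m i * e i`), let `σ ⊆ N_ℝ` be a closed convex
cone with dual cone `σ^∨ = {m : ⟨m, e⟩ ≥ 0 ∀ e ∈ σ}`, and let `□ ⊆ M_ℝ` be a nonempty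
closed convex set with `□ + σ^∨ ⊆ □`. Then `inf_{m ∈ □} ⟨m, e⟩ ≤ 0` for every `e ∈ σ`
if and only if `0 ∈ □`. -/
theorem stmt_12 (d : ℕ) (σ : Set (Fin d → ℝ))
    (hσclosed : IsClosed σ) (hσconv : Convex ℝ σ)
    (hσcone : ∀ c : ℝ, 0 ≤ c → ∀ x ∈ σ, c • x ∈ σ)
    (box : Set (Fin d → ℝ)) (hne : box.Nonempty)
    (hclosed : IsClosed box) (hconv : Convex ℝ box)
    (hsum : ∀ m ∈ box, ∀ n : Fin d → ℝ,
      (∀ e ∈ σ, 0 ≤ ∑ i, n i * e i) → m + n ∈ box) :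
    (∀ e ∈ σ, sInf ((fun m : Fin d → ℝ => ∑ i, m i * e i) '' box) ≤ 0) ↔
      (0 : Fin d → ℝ) ∈ box := by
  constructor
  · intro h
    rcases σ.eq_empty_or_nonempty with hσe | hσne
    · obtain ⟨m₀, hm₀⟩ := hne
      have := hsum m₀ hm₀ (-m₀) (by simp [hσe])
      simpa using this
    by_contra h0
    obtain ⟨f, u, hu, hf⟩ := geometric_hahn_banach_point_closed hconv hclosed h0
    have hu0 : 0 < u := by simpa using hu
    set e : Fin d → ℝ := fun i => f (Pi.single i 1) with he
    have hfe : ∀ m, f m = ∑ i, m i * e i := fun m => clm_eq_sum d f m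
    have h0σ : (0 : Fin d → ℝ) ∈ σ := by
      obtain ⟨x, hx⟩ := hσne
      simpa using hσcone 0 le_rfl x hx
    -- key: any vector in the dual cone has nonnegative f-value
    have key : ∀ n : Fin d → ℝ, (∀ x ∈ σ, 0 ≤ ∑ i, n i * x i) → 0 ≤ f n := by
      intro n hn
      obtain ⟨m₀, hm₀⟩ := hne
      by_contra hneg
      push_neg at hneg
      set t : ℝ := (f m₀ - u) / (-f n) with ht
      have htpos : 0 < t := div_pos (by linarith [hf m₀ hm₀]) (by linarith)
      have hmem : m₀ + t • n ∈ box := by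
        refine hsum m₀ hm₀ (t • n) ?_
        intro x hx
        have := hn x hx
        have : 0 ≤ t * ∑ i, n i * x i := mul_nonneg htpos.le this
        calc (0:ℝ) ≤ t * ∑ i, n i * x i := this
          _ = ∑ i, (t • n) i * x i := by
            rw [Finset.mul_sum]; exact Finset.sum_congr rfl fun i _ => by
              simp [mul_assoc]
      have hval : f (m₀ + t • n) = u := by
        have : f (m₀ + t • n) = f m₀ + t * f n := by
          simp [map_add, map_smul, smul_eq_mul]
        have hne' : f n ≠ 0 := ne_of_lt hneg
        have ht2 : t * f n = u - f m₀ := by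
          rw [ht, div_mul_eq_mul_div, div_eq_iff (neg_ne_zero.mpr hne')]
          ring
        rw [this, ht2]
        ring
      have := hf _ hmem
      rw [hval] at this
      exact lt_irrefl u this
    -- e ∈ σ, by separation
    have heσ : e ∈ σ := by
      by_contra heσ
      obtain ⟨g, v, hv, hg⟩ := geometric_hahn_banach_point_closed hσconv hσclosed heσ
      have hv0 : v < 0 := by simpa using hg 0 h0σ
      set n : Fin d → ℝ := fun i => g (Pi.single i 1) with hn
      have hgn : ∀ m, g m = ∑ i, m i * n i := fun m => clm_eq_sum d g m
      have hgx : ∀ x ∈ σ, 0 ≤ g x := by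
        intro x hx
        by_contra hneg
        push_neg at hneg
        have htpos : 0 < v / g x := div_pos_of_neg_of_neg hv0 hneg
        have := hg _ (hσcone _ htpos.le x hx)
        rw [map_smul, smul_eq_mul, div_mul_cancel₀ _ (ne_of_lt hneg)] at this
        exact lt_irrefl v this
      have hdual : ∀ x ∈ σ, 0 ≤ ∑ i, n i * x i := by
        intro x hx
        have := hgx x hx
        rw [hgn x] at this
        simpa [mul_comm] using this
      have h1 : 0 ≤ f n := key n hdual
      have h2 : f n = g e := by
        rw [hfe n, hgn e]
        exact Finset.sum_congr rfl fun i _ => mul_comm _ _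
      rw [h2] at h1
      linarith
    have hle := h e heσ
    have hge : u ≤ sInf ((fun m : Fin d → ℝ => ∑ i, m i * e i) '' box) := by
      apply le_csInf (hne.image _)
      rintro y ⟨m, hm, rfl⟩
      have := hf m hm
      rw [hfe m] at this
      exact this.le
    linarith
  · intro hbox e he
    have hmem : (0:ℝ) ∈ ((fun m : Fin d → ℝ => ∑ i, m i * e i) '' box) :=
      ⟨0, hbox, by simp⟩
    by_cases hb : BddBelow ((fun m : Fin d → ℝ => ∑ i, m i * e i) '' box)
    · exact csInf_le hb hmem
    · rw [Real.sInf_of_not_bddBelow hb]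
end

section
/- Let N_ℝ be a finite-dimensional real vector space with dual M_ℝ, let □ ⊆ M_ℝ be a nonempty closed convex set with 0 ∈ □, and let U = {e ∈ N_ℝ : ⟨m, e⟩ ≥ −1 for all m ∈ □} be its one-sided polar. Let φ ∈ M_ℝ and w > 0. Then the following are equivalent: (i) φ(U) ⊆ [0, w] and sup_{e∈U} ⟨φ, e⟩ = w; (ii) {x ∈ ℝ : x·φ ∈ □} = [−1/w, +∞). -/
private lemma bipolar (d : ℕ) (box : Set (Fin d → ℝ))
    (hclosed : IsClosed box) (hconv : Convex ℝ box)
    (h0 : (0 : Fin d → ℝ) ∈ box) (m : Fin d → ℝ)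
    (hm : ∀ e : Fin d → ℝ, (∀ m' ∈ box, -1 ≤ ∑ i, m' i * e i) → -1 ≤ ∑ i, m i * e i) :
    m ∈ box := by
  by_contra hmem
  obtain ⟨f, u, hfs, hfm⟩ := geometric_hahn_banach_closed_point hconv hclosed hmem
  have hu : 0 < u := by have := hfs 0 h0; simpa using this
  set e : Fin d → ℝ := fun i => -(1/u) * f (fun j => if i = j then 1 else 0) with he
  have key : ∀ m' : Fin d → ℝ, (∑ i, m' i * e i) = -(1/u) * f m' := by
    intro m'
    have hm' : f m' = ∑ i, m' i * f (fun j => if i = j then 1 else 0) := by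
      conv_lhs => rw [pi_eq_sum_univ m']
      rw [map_sum]
      simp [smul_eq_mul]
    rw [hm', Finset.mul_sum]
    apply Finset.sum_congr rfl
    intro i _
    simp [he]; ring
  have heU : ∀ m' ∈ box, -1 ≤ ∑ i, m' i * e i := by
    intro m' hm'
    rw [key]
    have h1 := hfs m' hm'
    have h2 : f m' / u < 1 := (div_lt_one hu).mpr h1
    have h3 : -(1/u) * f m' = -(f m' / u) := by ring
    linarith [h3 ▸ (neg_lt_neg h2)]
  have hfin := hm e heU
  rw [key] at hfin
  have h3 : (1:ℝ) < f m / u := (one_lt_div hu).mpr hfm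
  have h4 : -(1/u) * f m = -(f m / u) := by ring
  linarith

private lemma smul_sum' (d : ℕ) (x : ℝ) (φ e : Fin d → ℝ) :
    (∑ i, (x • φ) i * e i) = x * ∑ i, φ i * e i := by
  rw [Finset.mul_sum]
  apply Finset.sum_congr rfl
  intro i _
  simp [mul_assoc]

/-- Let `N_ℝ` be a finite-dimensional real vector space with dual `M_ℝ` (modelled as
`ℝ^d` paired with itself by `⟨m, e⟩ = ∑ i, m i * e i`), let `□ ⊆ M_ℝ` be a nonempty
closed convex set with `0 ∈ □`, and let `U = {e : ⟨m, e⟩ ≥ -1 ∀ m ∈ □}` be its one-sided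
polar. Let `φ ∈ M_ℝ` and `w > 0`. Then the following are equivalent:
(i) `φ(U) ⊆ [0, w]` and `sup_{e ∈ U} ⟨φ, e⟩ = w`;
(ii) `{x ∈ ℝ : x·φ ∈ □} = [-1/w, +∞)`. -/
theorem stmt_14 (d : ℕ) (box : Set (Fin d → ℝ)) (hne : box.Nonempty)
    (hclosed : IsClosed box) (hconv : Convex ℝ box)
    (h0 : (0 : Fin d → ℝ) ∈ box)
    (U : Set (Fin d → ℝ))
    (hU : U = {e | ∀ m ∈ box, -1 ≤ ∑ i, m i * e i})
    (φ : Fin d → ℝ) (w : ℝ) (hw : 0 < w) :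
    ((∀ e ∈ U, (∑ i, φ i * e i) ∈ Set.Icc 0 w) ∧
      IsLUB ((fun e : Fin d → ℝ => ∑ i, φ i * e i) '' U) w) ↔
    {x : ℝ | x • φ ∈ box} = Set.Ici (-1 / w) := by
  subst hU
  have hneg : (-1 : ℝ) / w < 0 := div_neg_of_neg_of_pos (by norm_num) hw
  have h0U : (0 : Fin d → ℝ) ∈ {e | ∀ m ∈ box, -1 ≤ ∑ i, m i * e i} := by
    intro m _; simp
  constructor
  · rintro ⟨hIcc, hlub⟩
    ext x
    simp only [Set.mem_setOf_eq, Set.mem_Ici]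
    constructor
    · intro hx
      by_contra hlt
      push_neg at hlt
      have hx0 : x < 0 := hlt.trans hneg
      have hub : (-1)/x ∈ upperBounds ((fun e : Fin d → ℝ => ∑ i, φ i * e i) ''
          {e | ∀ m ∈ box, -1 ≤ ∑ i, m i * e i}) := by
        rintro y ⟨e, he, rfl⟩
        have hbe := he _ hx
        rw [smul_sum'] at hbe
        rw [le_div_iff_of_neg hx0]
        nlinarith
      have hwle := hlub.2 hub
      have h1 : x * w < -1 := by
        have := mul_lt_mul_of_pos_right hlt hw
        rwa [div_mul_cancel₀ _ hw.ne'] at this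
      have h2 : -1 ≤ w * x := by
        have := mul_le_mul_of_nonpos_right hwle hx0.le
        rwa [div_mul_cancel₀ _ hx0.ne] at this
      nlinarith
    · intro hx
      apply bipolar d box hclosed hconv h0
      intro e he
      obtain ⟨h0e, hwe⟩ := hIcc e he
      rw [smul_sum']
      have hxw : -1 ≤ x * w := by
        have := mul_le_mul_of_nonneg_right hx hw.le
        rwa [div_mul_cancel₀ _ hw.ne'] at this
      rcases le_or_gt 0 x with hx0 | hx0
      · nlinarith
      · nlinarith
  · intro hS
    have hmem : ∀ x : ℝ, x • φ ∈ box ↔ -1/w ≤ x := by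
      intro x
      rw [Set.ext_iff] at hS
      simpa using hS x
    have hIcc : ∀ e ∈ {e : Fin d → ℝ | ∀ m ∈ box, -1 ≤ ∑ i, m i * e i},
        (∑ i, φ i * e i) ∈ Set.Icc 0 w := by
      intro e he
      constructor
      · by_contra hsneg
        push_neg at hsneg
        set s := ∑ i, φ i * e i with hs
        have hxmem : (-2/s) • φ ∈ box := by
          apply (hmem _).mpr
          have : 0 < -2/s := div_pos_of_neg_of_neg (by norm_num) hsneg
          linarith
        have hbe := he _ hxmem
        rw [smul_sum', ← hs, div_mul_cancel₀ _ hsneg.ne] at hbe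
        norm_num at hbe
      · have hmw : (-1/w) • φ ∈ box := (hmem _).mpr le_rfl
        have hbe := he _ hmw
        rw [smul_sum'] at hbe
        have h2 : -1/w * (∑ i, φ i * e i) = -((∑ i, φ i * e i)/w) := by ring
        rw [h2] at hbe
        have h3 : (∑ i, φ i * e i)/w ≤ 1 := by linarith
        exact (div_le_one hw).mp h3
    refine ⟨hIcc, ?_, ?_⟩
    · rintro y ⟨e, he, rfl⟩
      exact (hIcc e he).2
    · intro b hb
      by_contra hbw
      push_neg at hbw
      have hb0 : (0:ℝ) ≤ b := by
        have := hb (Set.mem_image_of_mem _ h0U)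
        simpa using this
      rcases eq_or_lt_of_le hb0 with hb0' | hb0'
      · -- b = 0 : take x = -2/w
        have hxmem : (-2/w) • φ ∈ box := by
          apply bipolar d box hclosed hconv h0
          intro e he
          have hsb : (∑ i, φ i * e i) ≤ b := hb (Set.mem_image_of_mem _ he)
          rw [smul_sum']
          have hx0 : -2/w < 0 := div_neg_of_neg_of_pos (by norm_num) hw
          nlinarith
        have := (hmem _).mp hxmem
        have h1 : (-1)/w * w ≤ (-2)/w * w :=
          mul_le_mul_of_nonneg_right this hw.le
        rw [div_mul_cancel₀ _ hw.ne', div_mul_cancel₀ _ hw.ne'] at h1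
        norm_num at h1
      · -- b > 0 : take x = -1/b
        have hxmem : (-1/b) • φ ∈ box := by
          apply bipolar d box hclosed hconv h0
          intro e he
          have hsb : (∑ i, φ i * e i) ≤ b := hb (Set.mem_image_of_mem _ he)
          rw [smul_sum']
          have h1 : (∑ i, φ i * e i) / b ≤ 1 := (div_le_one hb0').mpr hsb
          have h2 : (-1)/b * (∑ i, φ i * e i) = -((∑ i, φ i * e i)/b) := by ring
          linarith [h2 ▸ (neg_le_neg h1)]
        have hle := (hmem _).mp hxmem
        -- -1/w ≤ -1/b with 0 < b < w gives contradiction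
        have h1 : (-1)/w * (w*b) ≤ (-1)/b * (w*b) :=
          mul_le_mul_of_nonneg_right hle (by positivity)
        have h2 : (-1)/w * (w*b) = -b := by field_simp
        have h3 : (-1)/b * (w*b) = -w := by field_simp
        rw [h2, h3] at h1
        linarith
end

section
/- Let V be a finite-dimensional real vector space, σ ⊆ V a convex cone with nonempty topological interior, and φ ∈ V* a linear functional such that there exist e₊, e₋ ∈ σ with φ(e₊) > 0 and φ(e₋) < 0. Then (σ ∩ ker φ) − (σ ∩ ker φ) = ker φ; that is, the differences of elements of σ ∩ ker φ fill up the whole hyperplane ker φ. -/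
/-!
Translate an interior point `u` of `σ` by a vector `w ∈ σ` with `φ w = -φ u` (a nonnegative
multiple of `e₊` or `e₋`) to get a point `p = u + w` of `interior σ ∩ ker φ`. For `v ∈ ker φ`,
`c • p + v` lies in `σ` for `c` large, so `v = (c • p + v) - c • p` is a difference of
elements of `σ ∩ ker φ`.
-/

open Filter Topology

theorem add_mem_interior_of_add_mem {V : Type*} [AddCommGroup V] [TopologicalSpace V]
    [IsTopologicalAddGroup V] {s : Set V} (hadd : ∀ x ∈ s, ∀ y ∈ s, x + y ∈ s) {u w : V}
    (hu : u ∈ interior s) (hw : w ∈ s) : u + w ∈ interior s :=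
  interior_maximal (t := (· + w) '' interior s)
    (Set.image_subset_iff.mpr fun _ hx => hadd _ (interior_subset hx) _ hw)
    (isOpenMap_add_right w _ isOpen_interior) ⟨u, hu, rfl⟩

section Cone

variable {V : Type*} [AddCommGroup V] [Module ℝ V] {s : Set V}

theorem Convex.add_mem_of_smul_mem (hconv : Convex ℝ s)
    (hcone : ∀ c : ℝ, 0 ≤ c → ∀ x ∈ s, c • x ∈ s) {x y : V} (hx : x ∈ s) (hy : y ∈ s) :
    x + y ∈ s := by
  have h := hcone 2 zero_le_two _ (hconv hx hy one_half_pos.le one_half_pos.le (add_halves 1))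
  rwa [smul_add, smul_smul, smul_smul, mul_one_div_cancel two_ne_zero, one_smul, one_smul] at h

theorem exists_mem_apply_eq_of_pos_of_neg (hcone : ∀ c : ℝ, 0 ≤ c → ∀ x ∈ s, c • x ∈ s)
    (f : V →ₗ[ℝ] ℝ) {ep em : V} (hep : ep ∈ s) (hem : em ∈ s) (hfp : 0 < f ep)
    (hfm : f em < 0) (t : ℝ) : ∃ w ∈ s, f w = t := by
  rcases le_or_gt 0 t with ht | ht
  · exact ⟨(t / f ep) • ep, hcone _ (div_nonneg ht hfp.le) _ hep, by
      rw [map_smul, smul_eq_mul, div_mul_cancel₀ _ hfp.ne']⟩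
  · exact ⟨(t / f em) • em, hcone _ (div_nonneg_of_nonpos ht.le hfm.le) _ hem, by
      rw [map_smul, smul_eq_mul, div_mul_cancel₀ _ hfm.ne]⟩

theorem exists_smul_add_mem_of_mem_interior [TopologicalSpace V] [IsTopologicalAddGroup V]
    [ContinuousSMul ℝ V]
    (hcone : ∀ c : ℝ, 0 ≤ c → ∀ x ∈ s, c • x ∈ s) {p : V} (hp : p ∈ interior s) (v : V) :
    ∃ c : ℝ, 0 ≤ c ∧ c • p + v ∈ s := by
  have hnear : ∀ᶠ t : ℝ in 𝓝 0, p + t • v ∈ s :=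
    (Continuous.tendsto' (by fun_prop) 0 p (by simp)).eventually (mem_interior_iff_mem_nhds.mp hp)
  obtain ⟨t, ht, htpos⟩ := ((hnear.filter_mono nhdsWithin_le_nhds).and
    (self_mem_nhdsWithin (s := Set.Ioi 0))).exists
  refine ⟨t⁻¹, inv_nonneg.mpr (le_of_lt htpos), ?_⟩
  have h := hcone t⁻¹ (inv_nonneg.mpr (le_of_lt htpos)) _ ht
  rwa [smul_add, smul_smul, inv_mul_cancel₀ (ne_of_gt htpos), one_smul] at h

end Cone

theorem stmt_15_general {V : Type*} [NormedAddCommGroup V] [NormedSpace ℝ V]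
    (σ : Set V) (hσconv : Convex ℝ σ)
    (hσcone : ∀ c : ℝ, 0 ≤ c → ∀ x ∈ σ, c • x ∈ σ)
    (hint : (interior σ).Nonempty)
    (φ : Module.Dual ℝ V) (ep em : V) (hep : ep ∈ σ) (hem : em ∈ σ)
    (hφp : 0 < φ ep) (hφm : φ em < 0) :
    {z | ∃ x ∈ σ ∩ {v | φ v = 0}, ∃ y ∈ σ ∩ {v | φ v = 0}, z = x - y} =
      {v | φ v = 0} := by
  ext v
  constructor
  · rintro ⟨x, ⟨-, hx⟩, y, ⟨-, hy⟩, rfl⟩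
    simp only [Set.mem_ofPred_eq] at hx hy ⊢
    rw [map_sub, hx, hy, sub_zero]
  · intro hv
    obtain ⟨u, hu⟩ := hint
    obtain ⟨w, hw, hφw⟩ := exists_mem_apply_eq_of_pos_of_neg hσcone φ hep hem hφp hφm (-φ u)
    have hp : u + w ∈ interior σ :=
      add_mem_interior_of_add_mem (fun _ hx _ hy => hσconv.add_mem_of_smul_mem hσcone hx hy) hu hw
    have hpker : φ (u + w) = 0 := by rw [map_add, hφw, add_neg_cancel]
    obtain ⟨c, hc, hcv⟩ := exists_smul_add_mem_of_mem_interior hσcone hp v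
    refine ⟨c • (u + w) + v, ⟨hcv, ?_⟩, c • (u + w), ⟨hσcone c hc _ (interior_subset hp), ?_⟩,
      (add_sub_cancel_left _ _).symm⟩
    · simp only [Set.mem_ofPred_eq, map_add, map_smul, hpker, smul_zero, zero_add]
      exact hv
    · simp only [Set.mem_ofPred_eq, map_smul, hpker, smul_zero]

/-- Let `V` be a finite-dimensional real vector space, `σ ⊆ V` a convex cone with
nonempty topological interior, and `φ ∈ V*` a linear functional such that there exist
`e₊, e₋ ∈ σ` with `φ(e₊) > 0` and `φ(e₋) < 0`. Then
`(σ ∩ ker φ) - (σ ∩ ker φ) = ker φ`. -/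
theorem stmt_15 {V : Type*} [NormedAddCommGroup V] [NormedSpace ℝ V]
    [FiniteDimensional ℝ V]
    (σ : Set V) (hσconv : Convex ℝ σ)
    (hσcone : ∀ c : ℝ, 0 ≤ c → ∀ x ∈ σ, c • x ∈ σ)
    (hint : (interior σ).Nonempty)
    (φ : Module.Dual ℝ V) (ep em : V) (hep : ep ∈ σ) (hem : em ∈ σ)
    (hφp : 0 < φ ep) (hφm : φ em < 0) :
    {z | ∃ x ∈ σ ∩ {v | φ v = 0}, ∃ y ∈ σ ∩ {v | φ v = 0}, z = x - y} =
      {v | φ v = 0} :=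
  stmt_15_general σ hσconv hσcone hint φ ep em hep hem hφp hφm
end
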